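/- arXiv:2601.14373 — 4 statements merged into one kernel-verified Lean document; each statement's English description precedes it below -/
import Mathlib

section
/- Let R ∈ [0,1], T ∈ [0,1) and α, β ∈ ℝ. Define the Gaussian amplitude f : ℂ × ℂ → ℂ by f(γ,γ') = √(1−T²) · exp( −(|γ|² + |γ'|²)/2 + √R·(α·γ + β·γ') − (α² + β²)/2 + T·(√R·γ − α)·(√R·γ' − β) ). Then the function (γ,γ') ↦ |f(γ,γ')|² is integrable on ℂ × ℂ (with respect to Lebesgue measure on ℂ ≅ ℝ² in each factor) and (1/π²) ∫_ℂ ∫_ℂ |f(γ,γ')|² dγ dγ' = (1−T²)/(1−R²T²) · exp( (α² + β²)·(1 − R + R²T² − R·T²)/(R²T² − 1) − 2αβT·(R−1)²/(R²T² − 1) ). -/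
/-!
Writing `γ = x + iy`, `|f(γ, γ')|²` is a constant times the exponential of a real quadratic
polynomial on `ℂ² ≅ ℝ⁴` whose quadratic part is `-|γ|² - |γ'|² + 2TR·Re(γγ')`. Since
`Re(γγ') = ⟪conj γ, γ'⟫_ℝ`, the integral over `γ'` is a Gaussian integral with a linear term,
which leaves a Gaussian in `γ` with quadratic coefficient `1 - (TR)² > 0`; a second Gaussian
integral gives the closed form. Both are instances of the Gaussian integral on a
finite-dimensional real inner product space.
-/

open MeasureTheory Real RealInnerProductSpace

section InnerProductSpace

variable {V : Type*} [NormedAddCommGroup V] [InnerProductSpace ℝ V]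

noncomputable def coupledGaussian (A : V ≃ₗᵢ[ℝ] V) (k : ℝ) (p q : V) (z : V × V) : ℝ :=
  rexp (-‖z.1‖ ^ 2 - ‖z.2‖ ^ 2 + 2 * k * ⟪A z.1, z.2⟫ + ⟪p, z.1⟫ + ⟪q, z.2⟫)

theorem coupledGaussian_eq_mul (A : V ≃ₗᵢ[ℝ] V) (k : ℝ) (p q x y : V) :
    coupledGaussian A k p q (x, y) =
      rexp (-‖x‖ ^ 2 + ⟪p, x⟫) * rexp (-1 * ‖y‖ ^ 2 + ⟪(2 * k) • A x + q, y⟫) := by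
  rw [coupledGaussian, ← exp_add, inner_add_left, real_inner_smul_left]
  ring_nf

variable [FiniteDimensional ℝ V] [MeasurableSpace V] [BorelSpace V]

theorem integrable_rexp_neg_mul_sq_norm_add_inner {b : ℝ} (hb : 0 < b) (w : V) :
    Integrable (fun v : V ↦ rexp (-b * ‖v‖ ^ 2 + ⟪w, v⟫)) := by
  convert (GaussianFourier.integrable_cexp_neg_mul_sq_norm_add (b := (b : ℂ)) hb 1 w).re
    using 2 with v
  rw [RCLike.re_to_complex, ← Complex.exp_ofReal_re]
  push_cast
  ring_nf

theorem integral_rexp_neg_mul_sq_norm_add_inner {b : ℝ} (hb : 0 < b) (w : V) :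
    ∫ v : V, rexp (-b * ‖v‖ ^ 2 + ⟪w, v⟫) =
      (π / b) ^ (Module.finrank ℝ V / 2 : ℝ) * rexp (‖w‖ ^ 2 / (4 * b)) := by
  apply Complex.ofReal_injective
  rw [← integral_complex_ofReal]
  push_cast
  rw [Complex.ofReal_cpow (by positivity)]
  simpa using GaussianFourier.integral_cexp_neg_mul_sq_norm_add (b := (b : ℂ)) hb 1 w

variable (A : V ≃ₗᵢ[ℝ] V) (k : ℝ) (p q : V)

/-- Completing the square: `‖2k A x + q‖² = 4k²‖x‖² + 4k⟪A⁻¹ q, x⟫ + ‖q‖²`. -/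
theorem integral_coupledGaussian_fiber (x : V) :
    ∫ y, coupledGaussian A k p q (x, y) =
      π ^ (Module.finrank ℝ V / 2 : ℝ) * rexp (‖q‖ ^ 2 / 4) *
        rexp (-(1 - k ^ 2) * ‖x‖ ^ 2 + ⟪p + k • A.symm q, x⟫) := by
  simp_rw [coupledGaussian_eq_mul, integral_const_mul,
    integral_rexp_neg_mul_sq_norm_add_inner one_pos, div_one, mul_one]
  rw [mul_left_comm, ← exp_add, mul_assoc, ← exp_add]
  congr 2
  rw [norm_add_sq_real, norm_smul, A.norm_map, real_inner_smul_left, A.inner_map_eq_flip,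
    inner_add_left, real_inner_smul_left, real_inner_comm (A.symm q)]
  simp only [norm_mul, Real.norm_ofNat, Real.norm_eq_abs, mul_pow, sq_abs]
  ring

variable {k}

theorem integrable_coupledGaussian (hk : |k| < 1) : Integrable (coupledGaussian A k p q) := by
  have hk' : 0 < 1 - k ^ 2 := sub_pos.mpr ((sq_lt_one_iff_abs_lt_one k).mpr hk)
  rw [Measure.volume_eq_prod, integrable_prod_iff (by unfold coupledGaussian; fun_prop)]
  constructor
  · refine .of_forall fun x ↦ ?_
    simp_rw [coupledGaussian_eq_mul]
    exact (integrable_rexp_neg_mul_sq_norm_add_inner one_pos _).const_mul _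
  · have hnorm (z : V × V) : ‖coupledGaussian A k p q z‖ = coupledGaussian A k p q z :=
      Real.norm_of_nonneg (exp_nonneg _)
    simp_rw [hnorm, integral_coupledGaussian_fiber]
    exact (integrable_rexp_neg_mul_sq_norm_add_inner hk' _).const_mul _

theorem integral_coupledGaussian (hk : |k| < 1) :
    ∫ z, coupledGaussian A k p q z =
      π ^ (Module.finrank ℝ V / 2 : ℝ) * (π / (1 - k ^ 2)) ^ (Module.finrank ℝ V / 2 : ℝ) *
        rexp (‖q‖ ^ 2 / 4 + ‖p + k • A.symm q‖ ^ 2 / (4 * (1 - k ^ 2))) := by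
  have hk' : 0 < 1 - k ^ 2 := sub_pos.mpr ((sq_lt_one_iff_abs_lt_one k).mpr hk)
  rw [Measure.volume_eq_prod, integral_prod _ (integrable_coupledGaussian A p q hk)]
  simp_rw [integral_coupledGaussian_fiber, integral_const_mul,
    integral_rexp_neg_mul_sq_norm_add_inner hk', exp_add]
  ring

end InnerProductSpace

noncomputable def noClickAmplitude (R T α β : ℝ) (γ γ' : ℂ) : ℂ :=
  (Real.sqrt (1 - T ^ 2) : ℂ) *
    Complex.exp
      (-((‖γ‖ ^ 2 + ‖γ'‖ ^ 2 : ℝ) : ℂ) / 2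
        + (Real.sqrt R : ℂ) * ((α : ℂ) * γ + (β : ℂ) * γ')
        - ((α ^ 2 + β ^ 2 : ℝ) : ℂ) / 2
        + (T : ℂ) * ((Real.sqrt R : ℂ) * γ - (α : ℂ))
          * ((Real.sqrt R : ℂ) * γ' - (β : ℂ)))

theorem sq_norm_noClickAmplitude {R T : ℝ} (hR : 0 ≤ R) (hT : T ^ 2 ≤ 1) (α β : ℝ) (γ γ' : ℂ) :
    ‖noClickAmplitude R T α β γ γ'‖ ^ 2 =
      (1 - T ^ 2) * rexp (-(α ^ 2 + β ^ 2) + 2 * T * α * β) *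
        coupledGaussian Complex.conjLIE (T * R) (2 * √R * (α - T * β) : ℝ)
          (2 * √R * (β - T * α) : ℝ) (γ, γ') := by
  rw [noClickAmplitude, norm_mul, mul_pow, Complex.norm_exp, Complex.norm_real, Real.norm_eq_abs,
    sq_abs, Real.sq_sqrt (by linarith), sq (rexp _), ← exp_add, coupledGaussian,
    mul_assoc (1 - T ^ 2), ← exp_add]
  congr 2
  simp only [Complex.conjLIE_apply, Complex.inner, Complex.conj_ofReal, Complex.conj_conj,
    Complex.add_re, Complex.sub_re, Complex.neg_re, Complex.mul_re, Complex.div_re,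
    Complex.ofReal_re, Complex.ofReal_im, Complex.normSq_apply, Complex.sq_norm,
    Complex.re_ofNat, Complex.im_ofNat, Complex.add_im, Complex.sub_im, Complex.neg_im,
    Complex.mul_im]
  linear_combination 2 * T * (γ.re * γ'.re - γ.im * γ'.im) * Real.sq_sqrt hR

theorem integral_coupledGaussian_conjLIE_ofReal {k : ℝ} (hk : |k| < 1) (a b : ℝ) :
    ∫ z, coupledGaussian Complex.conjLIE k a b z =
      π ^ 2 / (1 - k ^ 2) * rexp (b ^ 2 / 4 + (a + k * b) ^ 2 / (4 * (1 - k ^ 2))) := by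
  rw [integral_coupledGaussian _ _ _ hk, Complex.finrank_real_complex]
  simp only [Complex.conjLIE_symm, Complex.conjLIE_apply, Complex.conj_ofReal, Complex.real_smul,
    ← Complex.ofReal_mul, ← Complex.ofReal_add, Complex.norm_real, Real.norm_eq_abs, sq_abs]
  norm_num
  ring

theorem noClick_exponent_eq {R T : ℝ} (hR : 0 ≤ R) (hk : |T * R| < 1) (α β : ℝ) :
    -(α ^ 2 + β ^ 2) + 2 * T * α * β + (2 * √R * (β - T * α)) ^ 2 / 4
        + (2 * √R * (α - T * β) + T * R * (2 * √R * (β - T * α))) ^ 2 / (4 * (1 - (T * R) ^ 2)) =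
      (α ^ 2 + β ^ 2) * (1 - R + R ^ 2 * T ^ 2 - R * T ^ 2) / (R ^ 2 * T ^ 2 - 1)
        - 2 * α * β * T * (R - 1) ^ 2 / (R ^ 2 * T ^ 2 - 1) := by
  have hk2 : (T * R) ^ 2 < 1 := (sq_lt_one_iff_abs_lt_one _).mpr hk
  obtain ⟨r, hr, rfl⟩ : ∃ r, 0 ≤ r ∧ R = r ^ 2 :=
    ⟨√R, Real.sqrt_nonneg R, (Real.sq_sqrt hR).symm⟩
  have h1 : 1 - (T * r ^ 2) ^ 2 ≠ 0 := by linarith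
  have h2 : (r ^ 2) ^ 2 * T ^ 2 - 1 ≠ 0 := by nlinarith
  rw [Real.sqrt_sq hr]
  ring_nf at h1 h2 ⊢
  field_simp
  ring

/-- The joint no-click probability of the photonic DIQKD circuit: the Gaussian
amplitude `f` has square-integrable modulus on `ℂ × ℂ` and the normalized
integral of `|f|²` has the stated closed form. -/
theorem gaussian_integral_joint_noclick
    (R T α β : ℝ) (hR0 : 0 ≤ R) (hR1 : R ≤ 1) (hT0 : 0 ≤ T) (hT1 : T < 1)
    (f : ℂ × ℂ → ℂ)
    (hf : ∀ γ γ' : ℂ, f (γ, γ') =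
      (Real.sqrt (1 - T ^ 2) : ℂ) *
        Complex.exp
          (-((‖γ‖ ^ 2 + ‖γ'‖ ^ 2 : ℝ) : ℂ) / 2
            + (Real.sqrt R : ℂ) * ((α : ℂ) * γ + (β : ℂ) * γ')
            - ((α ^ 2 + β ^ 2 : ℝ) : ℂ) / 2
            + (T : ℂ) * ((Real.sqrt R : ℂ) * γ - (α : ℂ))
              * ((Real.sqrt R : ℂ) * γ' - (β : ℂ)))) :
    Integrable (fun p : ℂ × ℂ => ‖f p‖ ^ 2) ∧
    (1 / Real.pi ^ 2) * ∫ p : ℂ × ℂ, ‖f p‖ ^ 2 =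
      (1 - T ^ 2) / (1 - R ^ 2 * T ^ 2) *
        Real.exp ((α ^ 2 + β ^ 2) * (1 - R + R ^ 2 * T ^ 2 - R * T ^ 2)
            / (R ^ 2 * T ^ 2 - 1)
          - 2 * α * β * T * (R - 1) ^ 2 / (R ^ 2 * T ^ 2 - 1)) := by
  have hk : |T * R| < 1 := by
    rw [abs_of_nonneg (by positivity)]
    nlinarith
  have hf_sq : (fun p => ‖f p‖ ^ 2) = fun p =>
      (1 - T ^ 2) * rexp (-(α ^ 2 + β ^ 2) + 2 * T * α * β) *
        coupledGaussian Complex.conjLIE (T * R) (2 * √R * (α - T * β) : ℝ)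
          (2 * √R * (β - T * α) : ℝ) p := by
    funext ⟨γ, γ'⟩
    rw [hf]
    exact sq_norm_noClickAmplitude hR0 (by nlinarith) α β γ γ'
  refine ⟨hf_sq ▸ (integrable_coupledGaussian _ _ _ hk).const_mul _, ?_⟩
  rw [hf_sq, integral_const_mul, integral_coupledGaussian_conjLIE_ofReal hk,
    ← noClick_exponent_eq hR0 hk α β, add_assoc (-(α ^ 2 + β ^ 2) + 2 * T * α * β),
    exp_add (-(α ^ 2 + β ^ 2) + 2 * T * α * β)]
  field_simp
end

section
/- Let c ∈ (−1,1) and u, v ∈ ℂ. Then the function (γ,γ') ↦ exp( −|γ|² − |γ'|² + 2c·Re(γγ') + 2·Re(uγ) + 2·Re(vγ') ) is integrable on ℂ × ℂ (with respect to Lebesgue measure on ℂ ≅ ℝ² in each factor) and (1/π²) ∫_ℂ ∫_ℂ exp( −|γ|² − |γ'|² + 2c·Re(γγ') + 2·Re(uγ) + 2·Re(vγ') ) dγ dγ' = (1/(1−c²)) · exp( (|u|² + |v|² + 2c·Re(uv)) / (1−c²) ). -/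
/-!
Integrate out `γ'` first: for fixed `γ` the exponent is `-‖γ'‖² + 2 Re((cγ + v)γ')` plus a term
in `γ` alone, so the planar Gaussian integral `∫ exp(-a‖z‖² + 2 Re(wz)) dz = (π / a) exp(‖w‖² / a)`
leaves `π exp(‖v‖²) exp(-(1 - c²)‖γ‖² + 2 Re((u + c v̄)γ))`. Since `|c| < 1` this is again a
Gaussian, and a second application gives the closed form. The integrand is positive, so the same
iterated computation shows via Tonelli that it is integrable on `ℂ × ℂ`.
-/

open MeasureTheory Real GaussianFourier ComplexConjugate
open scoped InnerProductSpace

section InnerProductSpace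

variable {V : Type*} [NormedAddCommGroup V] [InnerProductSpace ℝ V] [FiniteDimensional ℝ V]
  [MeasurableSpace V] [BorelSpace V]

theorem integrable_rexp_neg_mul_sq_norm_add {b : ℝ} (hb : 0 < b) (w : V) :
    Integrable (fun v : V ↦ rexp (-b * ‖v‖ ^ 2 + ⟪w, v⟫_ℝ)) := by
  convert (integrable_cexp_neg_mul_sq_norm_add (b := b) (by simpa) 1 w).re using 2 with v
  rw [one_mul, ← Complex.exp_ofReal_re]
  push_cast
  rfl

theorem integral_rexp_neg_mul_sq_norm_add {b : ℝ} (hb : 0 < b) (w : V) :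
    ∫ v : V, rexp (-b * ‖v‖ ^ 2 + ⟪w, v⟫_ℝ) =
      (π / b) ^ (Module.finrank ℝ V / 2 : ℝ) * rexp (‖w‖ ^ 2 / (4 * b)) := by
  apply Complex.ofReal_injective
  rw [← integral_complex_ofReal]
  convert integral_cexp_neg_mul_sq_norm_add (b := b) (by simpa) 1 w using 1
  · push_cast
    simp
  · push_cast
    rw [Complex.ofReal_cpow (by positivity)]
    simp

end InnerProductSpace

namespace Complex

theorem two_mul_re_mul_eq_inner (w z : ℂ) : 2 * (w * z).re = ⟪2 * conj w, z⟫_ℝ := by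
  rw [Complex.inner, map_mul, conj_conj, map_ofNat, mul_left_comm, mul_comm z]
  norm_num

theorem integrable_rexp_neg_mul_sq_norm_add_re {a : ℝ} (ha : 0 < a) (w : ℂ) :
    Integrable (fun z : ℂ ↦ rexp (-a * ‖z‖ ^ 2 + 2 * (w * z).re)) := by
  simpa only [two_mul_re_mul_eq_inner] using integrable_rexp_neg_mul_sq_norm_add ha _

theorem integral_rexp_neg_mul_sq_norm_add_re {a : ℝ} (ha : 0 < a) (w : ℂ) :
    ∫ z : ℂ, rexp (-a * ‖z‖ ^ 2 + 2 * (w * z).re) = π / a * rexp (‖w‖ ^ 2 / a) := by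
  simp_rw [two_mul_re_mul_eq_inner]
  rw [integral_rexp_neg_mul_sq_norm_add ha, finrank_real_complex, norm_mul, norm_conj]
  congr 2
  · norm_num
  · norm_num
    field_simp
    ring

theorem sq_norm_add_ofReal_mul_conj (c : ℝ) (u v : ℂ) :
    ‖u + c * conj v‖ ^ 2 = ‖u‖ ^ 2 + c ^ 2 * ‖v‖ ^ 2 + 2 * c * (u * v).re := by
  simp only [Complex.sq_norm, normSq_apply, mul_re, mul_im, add_re, add_im, ofReal_re, ofReal_im,
    conj_re, conj_im]
  ring

end Complex

section CoupledGaussian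

variable (c : ℝ) (u v : ℂ)

theorem coupled_gaussian_eq_mul_gaussian (γ γ' : ℂ) :
    rexp (-‖γ‖ ^ 2 - ‖γ'‖ ^ 2 + 2 * c * (γ * γ').re + 2 * (u * γ).re + 2 * (v * γ').re) =
      rexp (-‖γ‖ ^ 2 + 2 * (u * γ).re) * rexp (-1 * ‖γ'‖ ^ 2 + 2 * ((c * γ + v) * γ').re) := by
  rw [← exp_add]
  congr 1
  simp only [add_mul, Complex.add_re, mul_assoc, Complex.re_ofReal_mul]
  ring

theorem integrable_coupled_gaussian_slice (γ : ℂ) :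
    Integrable (fun γ' : ℂ ↦
      rexp (-‖γ‖ ^ 2 - ‖γ'‖ ^ 2 + 2 * c * (γ * γ').re + 2 * (u * γ).re + 2 * (v * γ').re)) := by
  simp_rw [coupled_gaussian_eq_mul_gaussian]
  exact (Complex.integrable_rexp_neg_mul_sq_norm_add_re one_pos _).const_mul _

theorem integral_coupled_gaussian_slice (γ : ℂ) :
    ∫ γ' : ℂ,
      rexp (-‖γ‖ ^ 2 - ‖γ'‖ ^ 2 + 2 * c * (γ * γ').re + 2 * (u * γ).re + 2 * (v * γ').re) =
      π * rexp (‖v‖ ^ 2) * rexp (-(1 - c ^ 2) * ‖γ‖ ^ 2 + 2 * ((u + c * conj v) * γ).re) := by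
  simp_rw [coupled_gaussian_eq_mul_gaussian]
  rw [integral_const_mul, Complex.integral_rexp_neg_mul_sq_norm_add_re one_pos, div_one, div_one,
    mul_left_comm, mul_assoc, ← exp_add, ← exp_add]
  congr 2
  simp only [Complex.sq_norm, Complex.normSq_apply, Complex.mul_re, Complex.mul_im,
    Complex.add_re, Complex.add_im, Complex.ofReal_re, Complex.ofReal_im, Complex.conj_re,
    Complex.conj_im]
  ring

end CoupledGaussian

/-- The coupled complex Gaussian integral underlying the closed-form no-click
probabilities of the photonic DIQKD circuit. -/
theorem coupled_complex_gaussian_integral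
    (c : ℝ) (hc : -1 < c) (hc' : c < 1) (u v : ℂ) :
    Integrable (fun p : ℂ × ℂ =>
      Real.exp (-‖p.1‖ ^ 2 - ‖p.2‖ ^ 2
        + 2 * c * (p.1 * p.2).re + 2 * (u * p.1).re + 2 * (v * p.2).re)) ∧
    (1 / Real.pi ^ 2) * ∫ p : ℂ × ℂ,
        Real.exp (-‖p.1‖ ^ 2 - ‖p.2‖ ^ 2
          + 2 * c * (p.1 * p.2).re + 2 * (u * p.1).re + 2 * (v * p.2).re) =
      (1 / (1 - c ^ 2)) *
        Real.exp ((‖u‖ ^ 2 + ‖v‖ ^ 2 + 2 * c * (u * v).re)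
          / (1 - c ^ 2)) := by
  have hc2 : 0 < 1 - c ^ 2 := by nlinarith
  have hmeas : AEStronglyMeasurable (fun p : ℂ × ℂ => rexp (-‖p.1‖ ^ 2 - ‖p.2‖ ^ 2
      + 2 * c * (p.1 * p.2).re + 2 * (u * p.1).re + 2 * (v * p.2).re)) (volume.prod volume) := by
    fun_prop
  have hint := (integrable_prod_iff hmeas).2
    ⟨.of_forall (integrable_coupled_gaussian_slice c u v), by
      simp_rw [Real.norm_of_nonneg (exp_pos _).le, integral_coupled_gaussian_slice]
      exact (Complex.integrable_rexp_neg_mul_sq_norm_add_re hc2 _).const_mul _⟩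
  rw [Measure.volume_eq_prod]
  refine ⟨hint, ?_⟩
  rw [integral_prod _ hint]
  simp_rw [integral_coupled_gaussian_slice]
  rw [integral_const_mul, Complex.integral_rexp_neg_mul_sq_norm_add_re hc2,
    Complex.sq_norm_add_ofReal_mul_conj]
  have hπ : π ≠ 0 := pi_ne_zero
  calc _ = 1 / (1 - c ^ 2) * (rexp (‖v‖ ^ 2)
          * rexp ((‖u‖ ^ 2 + c ^ 2 * ‖v‖ ^ 2 + 2 * c * (u * v).re) / (1 - c ^ 2))) := by
        field_simp
    _ = _ := by
        rw [← exp_add]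
        congr 2
        field_simp
        ring
end

section
/- (The block bound dominates the split bound.) Consider a block SDP with data as in the context, together with, for each block i = 1..m, real symmetric constraint matrices A'_{i,k} of size n_i (k = 1..K) with A'_{1,k} = A_k, satisfying the compatibility condition Tr(F_{i,j} A'_{i,k}) = Tr(F_{1,j} A_k) for all i, j, k. Suppose s ∈ ℝ^m is such that for every i and every y ∈ ℝ^J for which Δ := Σ_j y_j F_{i,j} is positive semidefinite and Tr(Δ A'_{i,k}) = b_k for all k, one has Tr(Δ C̃_i) ≥ s_i (i.e., s_i is a lower bound on the value of the i-th split sub-SDP). Then for every x ∈ ℝ^J primal feasible for b, with blocks Γ_i := Σ_j x_j F_{i,j}, one has Σ_i Tr(Γ_i C̃_i) ≥ Σ_i s_i. Consequently, the block SDP value is at least the sum of the split SDP values. -/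
open Matrix BigOperators

/-- The block bound dominates the split bound: if `s i` is a lower bound on
the value of the `i`-th split sub-SDP, then the block-SDP objective of any
primal feasible point is at least `∑ i, s i`. -/
theorem block_dominates_split
    (m J K : ℕ) (hm : 0 < m) (n : Fin m → ℕ)
    (F : (i : Fin m) → Fin J → Matrix (Fin (n i)) (Fin (n i)) ℝ)
    (A : Fin K → Matrix (Fin (n ⟨0, hm⟩)) (Fin (n ⟨0, hm⟩)) ℝ)
    (Ctil : (i : Fin m) → Matrix (Fin (n i)) (Fin (n i)) ℝ)
    (b : Fin K → ℝ)
    (hFsymm : ∀ i j, (F i j).IsSymm)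
    (hAsymm : ∀ k, (A k).IsSymm)
    (hCsymm : ∀ i, (Ctil i).IsSymm)
    -- per-block constraint matrices, compatible with those of the first block
    (A' : (i : Fin m) → Fin K → Matrix (Fin (n i)) (Fin (n i)) ℝ)
    (hA'symm : ∀ i k, (A' i k).IsSymm)
    (hA'first : ∀ k, A' ⟨0, hm⟩ k = A k)
    (hcompat : ∀ i j k, (F i j * A' i k).trace = (F ⟨0, hm⟩ j * A k).trace)
    -- s i is a lower bound on the i-th split sub-SDP
    (s : Fin m → ℝ)
    (hsplit : ∀ (i : Fin m) (y : Fin J → ℝ),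
      (∑ j, y j • F i j).PosSemidef →
      (∀ k, ((∑ j, y j • F i j) * A' i k).trace = b k) →
      s i ≤ ((∑ j, y j • F i j) * Ctil i).trace) :
    ∀ (x : Fin J → ℝ) (Γ : (i : Fin m) → Matrix (Fin (n i)) (Fin (n i)) ℝ),
      (∀ i, Γ i = ∑ j, x j • F i j) →
      (∀ i, (Γ i).PosSemidef) →
      (∀ k, (Γ ⟨0, hm⟩ * A k).trace = b k) →
      ∑ i, (Γ i * Ctil i).trace ≥ ∑ i, s i := by
  intro x Γ hΓ hpos hcon
  have key : ∀ i k, (Γ i * A' i k).trace = b k := by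
    intro i k
    have h1 : (Γ i * A' i k).trace = ∑ j, x j * (F i j * A' i k).trace := by
      rw [hΓ i, Matrix.sum_mul, Matrix.trace_sum]
      simp [Matrix.smul_mul, Matrix.trace_smul]
    have h2 : (Γ ⟨0, hm⟩ * A k).trace = ∑ j, x j * (F ⟨0, hm⟩ j * A k).trace := by
      rw [hΓ _, Matrix.sum_mul, Matrix.trace_sum]
      simp [Matrix.smul_mul, Matrix.trace_smul]
    rw [h1]
    rw [← hcon k, h2]
    exact Finset.sum_congr rfl fun j _ => by rw [hcompat i j k]
  apply Finset.sum_le_sum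
  intro i _
  have := hsplit i x (hΓ i ▸ hpos i) (fun k => by rw [← hΓ i]; exact key i k)
  rwa [← hΓ i] at this
end

section
/- (The full bound dominates the block bound.) Let F_j (j = 1..J), A_k (k = 1..K) and C be real symmetric N×N matrices, b ∈ ℝ^K, and let x ∈ ℝ^J be such that Γ := Σ_j x_j F_j is positive semidefinite and Tr(Γ A_k) = b_k for all k (a feasible point of the full SDP). Let e_i : {1..n_i} → {1..N} (i = 1..m) be injective maps, set F_{i,j} := the principal submatrix of F_j along e_i, and suppose: (a) each A_k vanishes outside the image of e_1, i.e. (A_k)_{p,q} = 0 whenever p or q is not in the range of e_1, with Ã_k the principal submatrix of A_k along e_1; and (b) there are real symmetric matrices C̃_i of size n_i with Tr(F_j C) = Σ_i Tr(F_{i,j} C̃_i) for every j. Then x is feasible for the block SDP with data (F_{i,j}, Ã_k, C̃_i, b): each Γ_i := Σ_j x_j F_{i,j} = (principal submatrix of Γ along e_i) is positive semidefinite, Tr(Γ_1 Ã_k) = b_k for all k, and Σ_i Tr(Γ_i C̃_i) = Tr(Γ C). Consequently, every lower bound s ∈ ℝ on the block SDP objective over block-feasible points satisfies s ≤ Tr(Γ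 C), i.e. the block SDP value is at most the full SDP value. -/
open Matrix BigOperators

lemma sub_sum_smul {J N K' : ℕ} (x : Fin J → ℝ) (F : Fin J → Matrix (Fin N) (Fin N) ℝ)
    (f : Fin K' → Fin N) :
    (∑ j, x j • F j).submatrix f f = ∑ j, x j • (F j).submatrix f f := by
  ext p q
  simp [Matrix.sum_apply]

lemma trace_sub {N K' : ℕ} (M A : Matrix (Fin N) (Fin N) ℝ) (f : Fin K' → Fin N)
    (hf : Function.Injective f)
    (hA : ∀ p q, (p ∉ Set.range f ∨ q ∉ Set.range f) → A p q = 0) :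
    (M.submatrix f f * A.submatrix f f).trace = (M * A).trace := by
  have key : ∀ g : Fin N → ℝ, (∀ p, p ∉ Set.range f → g p = 0) →
      ∑ a, g (f a) = ∑ p, g p := by
    intro g hg
    rw [← Finset.sum_image (fun a _ b _ h => hf h)]
    apply Finset.sum_subset (Finset.subset_univ _)
    intro p _ hp
    apply hg
    intro ⟨a, ha⟩
    exact hp (Finset.mem_image.mpr ⟨a, Finset.mem_univ a, ha⟩)
  simp only [Matrix.trace, Matrix.diag, Matrix.mul_apply, Matrix.submatrix_apply]
  have inner : ∀ p : Fin N, ∑ b, M p (f b) * A (f b) p = ∑ q, M p q * A q p :=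
    fun p => key (fun q => M p q * A q p)
      (fun q hq => by show M p q * A q p = 0; rw [hA q p (Or.inl hq), mul_zero])
  calc ∑ a, ∑ b, M (f a) (f b) * A (f b) (f a)
      = ∑ a, ∑ q, M (f a) q * A q (f a) :=
        Finset.sum_congr rfl (fun a _ => inner (f a))
    _ = ∑ p, ∑ q, M p q * A q p :=
        key (fun p => ∑ q, M p q * A q p)
          (fun p hp => Finset.sum_eq_zero
            (fun q _ => by rw [hA q p (Or.inr hp), mul_zero]))

/-- The full bound dominates the block bound: any feasible point of the full
SDP restricts to a feasible point of the block SDP built from the principal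
submatrices along the injections `e i`, with the same objective value; hence
every lower bound on the block SDP is at most the full SDP value. -/
theorem full_dominates_block
    (m J K N : ℕ) (hm : 0 < m) (n : Fin m → ℕ)
    (F : Fin J → Matrix (Fin N) (Fin N) ℝ)
    (A : Fin K → Matrix (Fin N) (Fin N) ℝ)
    (C : Matrix (Fin N) (Fin N) ℝ)
    (b : Fin K → ℝ)
    (hFsymm : ∀ j, (F j).IsSymm)
    (hAsymm : ∀ k, (A k).IsSymm)
    (hCsymm : C.IsSymm)
    -- a feasible point of the full SDP
    (x : Fin J → ℝ)
    (Γ : Matrix (Fin N) (Fin N) ℝ)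
    (hΓ : Γ = ∑ j, x j • F j)
    (hΓpos : Γ.PosSemidef)
    (hconstr : ∀ k, (Γ * A k).trace = b k)
    -- the injections selecting the monomials of each block
    (e : (i : Fin m) → Fin (n i) → Fin N)
    (he : ∀ i, Function.Injective (e i))
    -- (a) each A k vanishes outside the image of e 1
    (hAvanish : ∀ (k : Fin K) (p q : Fin N),
      (p ∉ Set.range (e ⟨0, hm⟩) ∨ q ∉ Set.range (e ⟨0, hm⟩)) → A k p q = 0)
    (Atil : Fin K → Matrix (Fin (n ⟨0, hm⟩)) (Fin (n ⟨0, hm⟩)) ℝ)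
    (hAtil : ∀ k, Atil k = (A k).submatrix (e ⟨0, hm⟩) (e ⟨0, hm⟩))
    -- (b) block objective matrices reproducing the full objective
    (Ctil : (i : Fin m) → Matrix (Fin (n i)) (Fin (n i)) ℝ)
    (hCtilsymm : ∀ i, (Ctil i).IsSymm)
    (hobj : ∀ j, (F j * C).trace
        = ∑ i, ((F j).submatrix (e i) (e i) * Ctil i).trace) :
    (∀ i, (∑ j, x j • (F j).submatrix (e i) (e i)) = Γ.submatrix (e i) (e i)) ∧
    (∀ i, (Γ.submatrix (e i) (e i)).PosSemidef) ∧
    (∀ k, (Γ.submatrix (e ⟨0, hm⟩) (e ⟨0, hm⟩) * Atil k).trace = b k) ∧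
    (∑ i, (Γ.submatrix (e i) (e i) * Ctil i).trace = (Γ * C).trace) ∧
    (∀ s : ℝ,
      (∀ y : Fin J → ℝ,
        (∀ i, (∑ j, y j • (F j).submatrix (e i) (e i)).PosSemidef) →
        (∀ k, ((∑ j, y j • (F j).submatrix (e ⟨0, hm⟩) (e ⟨0, hm⟩))
            * Atil k).trace = b k) →
        s ≤ ∑ i, ((∑ j, y j • (F j).submatrix (e i) (e i)) * Ctil i).trace) →
      s ≤ (Γ * C).trace) := by
  have h1 : ∀ i, (∑ j, x j • (F j).submatrix (e i) (e i)) = Γ.submatrix (e i) (e i) := by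
    intro i; rw [hΓ, sub_sum_smul]
  have h2 : ∀ i, (Γ.submatrix (e i) (e i)).PosSemidef := fun i => hΓpos.submatrix _
  have h3 : ∀ k, (Γ.submatrix (e ⟨0, hm⟩) (e ⟨0, hm⟩) * Atil k).trace = b k := by
    intro k
    rw [hAtil, trace_sub _ _ _ (he _) (hAvanish k), hconstr]
  have h4 : ∑ i, (Γ.submatrix (e i) (e i) * Ctil i).trace = (Γ * C).trace := by
    rw [Finset.sum_congr rfl (fun i _ => by rw [← h1 i] :
      ∀ i ∈ Finset.univ, (Γ.submatrix (e i) (e i) * Ctil i).trace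
        = ((∑ j, x j • (F j).submatrix (e i) (e i)) * Ctil i).trace)]
    simp only [Finset.sum_mul, Matrix.smul_mul, trace_sum, trace_smul]
    rw [Finset.sum_comm, hΓ, Finset.sum_mul, trace_sum]
    refine Finset.sum_congr rfl (fun j _ => ?_)
    rw [Matrix.smul_mul, trace_smul, hobj j, Finset.smul_sum]
  refine ⟨h1, h2, h3, h4, fun s hs => ?_⟩
  have := hs x (fun i => (h1 i) ▸ h2 i) (fun k => (h1 _) ▸ h3 k)
  calc s ≤ _ := this
    _ = (Γ * C).trace := by
        rw [← h4]; exact Finset.sum_congr rfl fun i _ => by rw [h1 i]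
end
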